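/- arXiv:2512.22002 — 5 statements merged into one kernel-verified Lean document; each statement's English description precedes it below -/
import Mathlib

section
/- For positive real numbers a, b, c, d, define four sequences with initial terms (a_0,b_0,c_0,d_0) = (a,b,c,d) by the recurrences a_{n+1} = (a_n+b_n+c_n+d_n)/4, b_{n+1} = (sqrt(a_n b_n)+sqrt(c_n d_n))/2, c_{n+1} = (sqrt(a_n c_n)+sqrt(b_n d_n))/2, d_{n+1} = (sqrt(a_n d_n)+sqrt(b_n c_n))/2. Then all four sequences converge to a common limit. -/
theorem borchardt_agm_converges (a b c d : ℝ)
    (ha : 0 < a) (hb : 0 < b) (hc : 0 < c) (hd : 0 < d)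
    (A B C D : ℕ → ℝ)
    (hA0 : A 0 = a) (hB0 : B 0 = b) (hC0 : C 0 = c) (hD0 : D 0 = d)
    (hA : ∀ n, A (n + 1) = (A n + B n + C n + D n) / 4)
    (hB : ∀ n, B (n + 1) = (Real.sqrt (A n * B n) + Real.sqrt (C n * D n)) / 2)
    (hC : ∀ n, C (n + 1) = (Real.sqrt (A n * C n) + Real.sqrt (B n * D n)) / 2)
    (hD : ∀ n, D (n + 1) = (Real.sqrt (A n * D n) + Real.sqrt (B n * C n)) / 2) :
    ∃ L : ℝ, Filter.Tendsto A Filter.atTop (nhds L) ∧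
      Filter.Tendsto B Filter.atTop (nhds L) ∧
      Filter.Tendsto C Filter.atTop (nhds L) ∧
      Filter.Tendsto D Filter.atTop (nhds L) := by
  set m : ℝ := min (min a b) (min c d) with hm
  have hm0 : 0 < m := by positivity
  -- all four sequences are bounded below by m
  have hlow : ∀ n, m ≤ A n ∧ m ≤ B n ∧ m ≤ C n ∧ m ≤ D n := by
    intro n
    induction n with
    | zero =>
      rw [hA0, hB0, hC0, hD0]
      refine ⟨?_, ?_, ?_, ?_⟩ <;> simp [hm, min_le_iff, le_refl]
    | succ k ih =>
      obtain ⟨h1, h2, h3, h4⟩ := ih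
      have key : ∀ x y : ℝ, m ≤ x → m ≤ y → m ≤ Real.sqrt (x * y) := by
        intro x y hx hy
        have : m = Real.sqrt (m * m) := by
          rw [Real.sqrt_mul_self hm0.le]
        rw [this]
        exact Real.sqrt_le_sqrt (mul_le_mul hx hy hm0.le (hm0.le.trans hx))
      refine ⟨?_, ?_, ?_, ?_⟩
      · rw [hA]; linarith
      · rw [hB]; have := key _ _ h1 h2; have := key _ _ h3 h4; linarith
      · rw [hC]; have := key _ _ h1 h3; have := key _ _ h2 h4; linarith
      · rw [hD]; have := key _ _ h1 h4; have := key _ _ h2 h3; linarith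
  -- A (n+1) dominates B,C,D at n+1
  have hdom : ∀ n, B (n + 1) ≤ A (n + 1) ∧ C (n + 1) ≤ A (n + 1) ∧
      D (n + 1) ≤ A (n + 1) := by
    intro n
    obtain ⟨h1, h2, h3, h4⟩ := hlow n
    have ha' : 0 ≤ A n := hm0.le.trans h1
    have hb' : 0 ≤ B n := hm0.le.trans h2
    have hc' : 0 ≤ C n := hm0.le.trans h3
    have hd' : 0 ≤ D n := hm0.le.trans h4
    set sa := Real.sqrt (A n)
    set sb := Real.sqrt (B n)
    set sc := Real.sqrt (C n)
    set sd := Real.sqrt (D n)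
    have eA : A n = sa ^ 2 := (Real.sq_sqrt ha').symm
    have eB : B n = sb ^ 2 := (Real.sq_sqrt hb').symm
    have eC : C n = sc ^ 2 := (Real.sq_sqrt hc').symm
    have eD : D n = sd ^ 2 := (Real.sq_sqrt hd').symm
    rw [hA, hB, hC, hD, Real.sqrt_mul ha', Real.sqrt_mul ha', Real.sqrt_mul ha',
      Real.sqrt_mul hb', Real.sqrt_mul hb', Real.sqrt_mul hc']
    refine ⟨?_, ?_, ?_⟩
    · nlinarith [sq_nonneg (sa - sb), sq_nonneg (sc - sd)]
    · nlinarith [sq_nonneg (sa - sc), sq_nonneg (sb - sd)]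
    · nlinarith [sq_nonneg (sa - sd), sq_nonneg (sb - sc)]
  -- A is antitone from index 1
  have hanti : ∀ n, A (n + 2) ≤ A (n + 1) := by
    intro n
    obtain ⟨h1, h2, h3⟩ := hdom n
    rw [hA]
    linarith
  have hantiF : Antitone (fun n => A (n + 1)) := by
    apply antitone_nat_of_succ_le
    intro n
    exact hanti n
  have hbdd : BddBelow (Set.range fun n => A (n + 1)) := by
    refine ⟨m, ?_⟩
    rintro x ⟨n, rfl⟩
    exact (hlow (n + 1)).1
  obtain ⟨L, hL⟩ : ∃ L, Filter.Tendsto (fun n => A (n + 1)) Filter.atTop (nhds L) :=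
    ⟨_, tendsto_atTop_ciInf hantiF hbdd⟩
  have hAL : Filter.Tendsto A Filter.atTop (nhds L) :=
    (Filter.tendsto_add_atTop_iff_nat 1).mp hL
  -- the auxiliary lower-bound sequence tends to L
  have haux : Filter.Tendsto (fun n => 4 * A (n + 1) - 3 * A n) Filter.atTop (nhds L) := by
    have := (hL.const_mul 4).sub (hAL.const_mul 3)
    have h4 : 4 * L - 3 * L = L := by ring
    rwa [h4] at this
  refine ⟨L, hAL, ?_, ?_, ?_⟩
  · apply tendsto_of_tendsto_of_tendsto_of_le_of_le' haux hAL
    · filter_upwards [Filter.eventually_ge_atTop 1] with n hn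
      obtain ⟨k, rfl⟩ := Nat.exists_eq_add_of_le hn
      obtain ⟨h1, h2, h3⟩ := hdom k
      have := hA (k + 1)
      simp only [add_comm 1 k] at *
      linarith [this]
    · filter_upwards [Filter.eventually_ge_atTop 1] with n hn
      obtain ⟨k, rfl⟩ := Nat.exists_eq_add_of_le hn
      simpa [add_comm 1 k] using (hdom k).1
  · apply tendsto_of_tendsto_of_tendsto_of_le_of_le' haux hAL
    · filter_upwards [Filter.eventually_ge_atTop 1] with n hn
      obtain ⟨k, rfl⟩ := Nat.exists_eq_add_of_le hn
      obtain ⟨h1, h2, h3⟩ := hdom k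
      have := hA (k + 1)
      simp only [add_comm 1 k] at *
      linarith [this]
    · filter_upwards [Filter.eventually_ge_atTop 1] with n hn
      obtain ⟨k, rfl⟩ := Nat.exists_eq_add_of_le hn
      simpa [add_comm 1 k] using (hdom k).2.1
  · apply tendsto_of_tendsto_of_tendsto_of_le_of_le' haux hAL
    · filter_upwards [Filter.eventually_ge_atTop 1] with n hn
      obtain ⟨k, rfl⟩ := Nat.exists_eq_add_of_le hn
      obtain ⟨h1, h2, h3⟩ := hdom k
      have := hA (k + 1)
      simp only [add_comm 1 k] at *
      linarith [this]
    · filter_upwards [Filter.eventually_ge_atTop 1] with n hn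
      obtain ⟨k, rfl⟩ := Nat.exists_eq_add_of_le hn
      simpa [add_comm 1 k] using (hdom k).2.2
end

section
/- For positive reals a, b, c, d with the initial values satisfying a = c and b = d, the Borchardt AGM satisfies M_B(a,b,a,b) = M_G(a,b), where M_G is the Gauss arithmetic-geometric mean. -/
theorem borchardt_eq_gauss (a b : ℝ) (ha : 0 < a) (hb : 0 < b)
    (A B C D : ℕ → ℝ)
    (hA0 : A 0 = a) (hB0 : B 0 = b) (hC0 : C 0 = a) (hD0 : D 0 = b)
    (hA : ∀ n, A (n + 1) = (A n + B n + C n + D n) / 4)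
    (hB : ∀ n, B (n + 1) = (Real.sqrt (A n * B n) + Real.sqrt (C n * D n)) / 2)
    (hC : ∀ n, C (n + 1) = (Real.sqrt (A n * C n) + Real.sqrt (B n * D n)) / 2)
    (hD : ∀ n, D (n + 1) = (Real.sqrt (A n * D n) + Real.sqrt (B n * C n)) / 2)
    (MB : ℝ)
    (hMB_A : Filter.Tendsto A Filter.atTop (nhds MB))
    (hMB_B : Filter.Tendsto B Filter.atTop (nhds MB))
    (hMB_C : Filter.Tendsto C Filter.atTop (nhds MB))
    (hMB_D : Filter.Tendsto D Filter.atTop (nhds MB))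
    (X Y : ℕ → ℝ) (hX0 : X 0 = a) (hY0 : Y 0 = b)
    (hX : ∀ n, X (n + 1) = (X n + Y n) / 2)
    (hY : ∀ n, Y (n + 1) = Real.sqrt (X n * Y n))
    (MG : ℝ)
    (hMG_X : Filter.Tendsto X Filter.atTop (nhds MG))
    (hMG_Y : Filter.Tendsto Y Filter.atTop (nhds MG)) :
    MB = MG := by
  have key : ∀ n, A n = X n ∧ B n = Y n ∧ C n = X n ∧ D n = Y n ∧ 0 < X n ∧ 0 < Y n := by
    intro n
    induction n with
    | zero => simp [hA0, hB0, hC0, hD0, hX0, hY0, ha, hb]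
    | succ n ih =>
      obtain ⟨hAX, hBY, hCX, hDY, hXpos, hYpos⟩ := ih
      have hsq : Real.sqrt (X n * X n) = X n := by
        rw [Real.sqrt_mul_self hXpos.le]
      have hsqY : Real.sqrt (Y n * Y n) = Y n := by
        rw [Real.sqrt_mul_self hYpos.le]
      have hXY : Real.sqrt (Y n * X n) = Real.sqrt (X n * Y n) := by rw [mul_comm]
      refine ⟨?_, ?_, ?_, ?_, ?_, ?_⟩
      · rw [hA n, hX n, hAX, hBY, hCX, hDY]; try ring
      · rw [hB n, hY n, hAX, hBY, hCX, hDY]; try ring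
      · rw [hC n, hX n, hAX, hBY, hCX, hDY, hsq, hsqY]; try ring
      · rw [hD n, hY n, hAX, hBY, hCX, hDY, hXY]; try ring
      · rw [hX n]; positivity
      · rw [hY n]; positivity
  have hAXeq : A = X := funext fun n => (key n).1
  rw [hAXeq] at hMB_A
  exact tendsto_nhds_unique hMB_A hMG_X
end

section
/- For real numbers 0 < d ≤ c ≤ b ≤ a, define four sequences with initial terms (a_0,b_0,c_0,d_0)=(a,b,c,d) by a_{n+1} = (a_n+b_n+c_n+d_n)/4, b_{n+1} = sqrt((a_n+d_n)(b_n+c_n))/2, c_{n+1} = sqrt((a_n+c_n)(b_n+d_n))/2, d_{n+1} = sqrt((a_n+b_n)(c_n+d_n))/2. Then all four sequences converge to a common positive limit. -/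
theorem matsumoto_agm_converges (a b c d : ℝ)
    (hd : 0 < d) (hdc : d ≤ c) (hcb : c ≤ b) (hba : b ≤ a)
    (A B C D : ℕ → ℝ)
    (hA0 : A 0 = a) (hB0 : B 0 = b) (hC0 : C 0 = c) (hD0 : D 0 = d)
    (hA : ∀ n, A (n + 1) = (A n + B n + C n + D n) / 4)
    (hB : ∀ n, B (n + 1) = Real.sqrt ((A n + D n) * (B n + C n)) / 2)
    (hC : ∀ n, C (n + 1) = Real.sqrt ((A n + C n) * (B n + D n)) / 2)
    (hD : ∀ n, D (n + 1) = Real.sqrt ((A n + B n) * (C n + D n)) / 2) :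
    ∃ L : ℝ, 0 < L ∧
      Filter.Tendsto A Filter.atTop (nhds L) ∧
      Filter.Tendsto B Filter.atTop (nhds L) ∧
      Filter.Tendsto C Filter.atTop (nhds L) ∧
      Filter.Tendsto D Filter.atTop (nhds L) := by
  -- order invariant
  have key : ∀ n, 0 < D n ∧ D n ≤ C n ∧ C n ≤ B n ∧ B n ≤ A n := by
    intro n
    induction n with
    | zero => rw [hA0, hB0, hC0, hD0]; exact ⟨hd, hdc, hcb, hba⟩
    | succ n ih =>
      obtain ⟨h1, h2, h3, h4⟩ := ih
      have hDn : 0 < D n := h1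
      have hCn : 0 < C n := lt_of_lt_of_le h1 h2
      have hBn : 0 < B n := lt_of_lt_of_le hCn h3
      have hAn : 0 < A n := lt_of_lt_of_le hBn h4
      rw [hA n, hB n, hC n, hD n]
      refine ⟨by positivity, ?_, ?_, ?_⟩
      · have : (A n + B n) * (C n + D n) ≤ (A n + C n) * (B n + D n) := by nlinarith
        have := Real.sqrt_le_sqrt this
        linarith
      · have : (A n + C n) * (B n + D n) ≤ (A n + D n) * (B n + C n) := by nlinarith
        have := Real.sqrt_le_sqrt this
        linarith
      · have h5 : (A n + D n) * (B n + C n) ≤ ((A n + B n + C n + D n) / 2) ^ 2 := by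
          nlinarith [sq_nonneg (A n + D n - B n - C n)]
        have h6 := Real.sqrt_le_sqrt h5
        rw [Real.sqrt_sq (by linarith)] at h6
        linarith
  -- D is monotone increasing
  have hDmono : Monotone D := by
    apply monotone_nat_of_le_succ
    intro n
    obtain ⟨h1, h2, h3, h4⟩ := key n
    rw [hD n]
    have h5 : (2 * D n) * (2 * D n) ≤ (A n + B n) * (C n + D n) := by nlinarith
    have h6 := Real.sqrt_le_sqrt h5
    rw [Real.sqrt_mul_self (by linarith)] at h6
    linarith
  -- the gap contracts by factor 1/2
  have gap_half : ∀ n, A (n + 1) - D (n + 1) ≤ (A n - D n) / 2 := by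
    intro n
    obtain ⟨h1, h2, h3, h4⟩ := key n
    set s := A n + B n with hs
    set t := C n + D n with ht
    have hts : t ≤ s := by dsimp [s, t]; linarith
    have ht0 : 0 ≤ t := by dsimp [t]; linarith
    have hsqrt : t ≤ Real.sqrt (s * t) := by
      have : t * t ≤ s * t := by nlinarith
      have h6 := Real.sqrt_le_sqrt this
      rwa [Real.sqrt_mul_self ht0] at h6
    rw [hA n, hD n]
    have : (A n + B n + C n + D n) / 4 - Real.sqrt (s * t) / 2 ≤ (s - t) / 4 := by
      have : (A n + B n + C n + D n) / 4 = (s + t) / 4 := by dsimp [s, t]; ring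
      rw [this]; linarith
    have hst : (s - t) / 4 ≤ (A n - D n) / 2 := by dsimp [s, t]; linarith
    linarith
  -- gap bound by geometric sequence
  have gap_bound : ∀ n, A n - D n ≤ (a - d) * (1 / 2) ^ n := by
    intro n
    induction n with
    | zero => simp [hA0, hD0]
    | succ n ih =>
      calc A (n + 1) - D (n + 1) ≤ (A n - D n) / 2 := gap_half n
        _ ≤ ((a - d) * (1 / 2) ^ n) / 2 := by linarith
        _ = (a - d) * (1 / 2) ^ (n + 1) := by ring
  have gap_nonneg : ∀ n, 0 ≤ A n - D n := by
    intro n; obtain ⟨h1, h2, h3, h4⟩ := key n; linarith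
  -- gap tends to 0
  have gap_tendsto : Filter.Tendsto (fun n => A n - D n) Filter.atTop (nhds 0) := by
    have hgeo : Filter.Tendsto (fun n : ℕ => (a - d) * (1 / 2) ^ n) Filter.atTop (nhds 0) := by
      have := tendsto_pow_atTop_nhds_zero_of_lt_one (by norm_num : (0:ℝ) ≤ 1/2) (by norm_num)
      simpa using this.const_mul (a - d)
    exact tendsto_of_tendsto_of_tendsto_of_le_of_le tendsto_const_nhds hgeo gap_nonneg gap_bound
  -- A bounds everything above by A 0 = a
  have hAa : ∀ n, A n ≤ a := by
    intro n
    induction n with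
    | zero => rw [hA0]
    | succ n ih =>
      obtain ⟨h1, h2, h3, h4⟩ := key n
      rw [hA n]; linarith
  have hDbdd : BddAbove (Set.range D) := by
    refine ⟨a, ?_⟩
    rintro x ⟨n, rfl⟩
    obtain ⟨h1, h2, h3, h4⟩ := key n
    exact le_trans (le_trans h2 (le_trans h3 h4)) (hAa n)
  -- D converges
  set L := ⨆ n, D n with hL
  have hDL : Filter.Tendsto D Filter.atTop (nhds L) := tendsto_atTop_ciSup hDmono hDbdd
  have hLpos : 0 < L := by
    have : D 0 ≤ L := le_ciSup hDbdd 0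
    rw [hD0] at this; linarith
  have hAL : Filter.Tendsto A Filter.atTop (nhds L) := by
    have : Filter.Tendsto (fun n => D n + (A n - D n)) Filter.atTop (nhds (L + 0)) :=
      hDL.add gap_tendsto
    simpa using this
  have hBL : Filter.Tendsto B Filter.atTop (nhds L) :=
    tendsto_of_tendsto_of_tendsto_of_le_of_le hDL hAL
      (fun n => le_trans (key n).2.1 (key n).2.2.1) (fun n => (key n).2.2.2)
  have hCL : Filter.Tendsto C Filter.atTop (nhds L) :=
    tendsto_of_tendsto_of_tendsto_of_le_of_le hDL hAL
      (fun n => (key n).2.1) (fun n => le_trans (key n).2.2.1 (key n).2.2.2)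
  exact ⟨L, hLpos, hAL, hBL, hCL, hDL⟩
end

section
/- For real numbers 0 < b ≤ a, the two sequences defined by a_0 = a, b_0 = b, a_{n+1} = (a_n + 3b_n)/4, b_{n+1} = sqrt(((a_n + b_n)/2) · b_n) converge to a common limit. -/
theorem borwein_agm_converges (a b : ℝ) (hb : 0 < b) (hba : b ≤ a)
    (A B : ℕ → ℝ) (hA0 : A 0 = a) (hB0 : B 0 = b)
    (hA : ∀ n, A (n + 1) = (A n + 3 * B n) / 4)
    (hB : ∀ n, B (n + 1) = Real.sqrt (((A n + B n) / 2) * B n)) :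
    ∃ L : ℝ, Filter.Tendsto A Filter.atTop (nhds L) ∧
      Filter.Tendsto B Filter.atTop (nhds L) := by
  have key : ∀ n, 0 < B n ∧ B n ≤ A n := by
    intro n
    induction n with
    | zero => rw [hA0, hB0]; exact ⟨hb, hba⟩
    | succ n ih =>
      obtain ⟨hbpos, hle⟩ := ih
      have hApos : 0 < A n := lt_of_lt_of_le hbpos hle
      have harg : 0 < ((A n + B n) / 2) * B n := by positivity
      have hBpos : 0 < B (n + 1) := by rw [hB]; exact Real.sqrt_pos.mpr harg
      refine ⟨hBpos, ?_⟩
      rw [hB]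
      calc Real.sqrt (((A n + B n) / 2) * B n)
          ≤ Real.sqrt (((A n + 3 * B n) / 4) ^ 2) := by
            apply Real.sqrt_le_sqrt
            nlinarith [sq_nonneg (A n - B n)]
        _ = (A n + 3 * B n) / 4 := Real.sqrt_sq (by linarith)
        _ = A (n + 1) := (hA n).symm
  have hanti : Antitone A := antitone_nat_of_succ_le (fun n => by
    rw [hA]; have := (key n).2; linarith)
  have hbdd : BddBelow (Set.range A) := by
    refine ⟨0, ?_⟩
    rintro x ⟨n, rfl⟩
    exact le_of_lt (lt_of_lt_of_le (key n).1 (key n).2)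
  have hAt : Filter.Tendsto A Filter.atTop (nhds (⨅ n, A n)) :=
    tendsto_atTop_ciInf hanti hbdd
  set L := ⨅ n, A n with hL
  refine ⟨L, hAt, ?_⟩
  have hshift : Filter.Tendsto (fun n => A (n + 1)) Filter.atTop (nhds L) :=
    hAt.comp (Filter.tendsto_add_atTop_nat 1)
  have ht : Filter.Tendsto (fun n => (4 * A (n + 1) - A n) / 3) Filter.atTop
      (nhds ((4 * L - L) / 3)) :=
    ((hshift.const_mul 4).sub hAt).div_const 3
  have heq : B = fun n => (4 * A (n + 1) - A n) / 3 := by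
    funext n; rw [hA]; ring
  have hLeq : (4 * L - L) / 3 = L := by ring
  rw [heq, ← hLeq]
  exact ht
end

section
/- Let U be the 4×4 matrix with rows (0,1,0,0), (1,0,0,0), (0,0,1,0), (0,0,0,1). For any g in the unitary group U(U,ℂ) = {g ∈ GL(4,ℂ) : g* U g = U}, the 8×8 real matrix j(g) = ((U·Re(g)·U, U·Im(g)), (-Im(g)·U, Re(g))) satisfies j(g) J₈ j(g)ᵀ = J₈, i.e., j(g) ∈ Sp(8,ℝ). Moreover j is a group homomorphism: j(gh) = j(g)j(h). -/
open Matrix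

/-- The matrix `U` with rows (0,1,0,0), (1,0,0,0), (0,0,1,0), (0,0,0,1), over the reals. -/
def Umat : Matrix (Fin 4) (Fin 4) ℝ := !![0,1,0,0; 1,0,0,0; 0,0,1,0; 0,0,0,1]

/-- `U` regarded as a complex matrix. -/
noncomputable def UmatC : Matrix (Fin 4) (Fin 4) ℂ := Umat.map (fun r => (r : ℂ))

/-- The standard symplectic form matrix of size 8. -/
def J8 : Matrix (Fin 4 ⊕ Fin 4) (Fin 4 ⊕ Fin 4) ℝ := Matrix.fromBlocks 0 (-1) 1 0

/-- The embedding `j` from 4×4 complex matrices into 8×8 real matrices: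
`j(g) = ((U·Re(g)·U, U·Im(g)), (-Im(g)·U, Re(g)))`. -/
def jmap (g : Matrix (Fin 4) (Fin 4) ℂ) :
    Matrix (Fin 4 ⊕ Fin 4) (Fin 4 ⊕ Fin 4) ℝ :=
  Matrix.fromBlocks (Umat * g.map (fun z => z.re) * Umat) (Umat * g.map (fun z => z.im))
    (-(g.map (fun z => z.im) * Umat)) (g.map (fun z => z.re))

lemma Umat_mul_Umat : Umat * Umat = 1 := by
  ext i j; fin_cases i <;> fin_cases j <;>
    simp [Umat, Matrix.mul_apply, Fin.sum_univ_four, Matrix.one_apply, Matrix.vecHead, Matrix.vecTail]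

lemma Umat_transpose : Umatᵀ = Umat := by
  ext i j; fin_cases i <;> fin_cases j <;> simp [Umat, Matrix.vecHead, Matrix.vecTail]

lemma re_mul (A B : Matrix (Fin 4) (Fin 4) ℂ) :
    (A*B).map Complex.re = A.map Complex.re * B.map Complex.re - A.map Complex.im * B.map Complex.im := by
  ext i j
  simp [Matrix.mul_apply, Matrix.map_apply, Complex.mul_re, Finset.sum_sub_distrib]

lemma im_mul (A B : Matrix (Fin 4) (Fin 4) ℂ) :
    (A*B).map Complex.im = A.map Complex.re * B.map Complex.im + A.map Complex.im * B.map Complex.re := by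
  ext i j
  simp [Matrix.mul_apply, Matrix.map_apply, Complex.mul_im, Finset.sum_add_distrib]

lemma re_ct (A : Matrix (Fin 4) (Fin 4) ℂ) : (Aᴴ).map Complex.re = (A.map Complex.re)ᵀ := by
  ext i j; simp [Matrix.conjTranspose_apply, Matrix.map_apply]

lemma im_ct (A : Matrix (Fin 4) (Fin 4) ℂ) : (Aᴴ).map Complex.im = -(A.map Complex.im)ᵀ := by
  ext i j; simp [Matrix.conjTranspose_apply, Matrix.map_apply]

lemma UmatC_mul_UmatC : UmatC * UmatC = 1 := by
  rw [show UmatC = Umat.map (algebraMap ℝ ℂ) from rfl, ← Matrix.map_mul, Umat_mul_Umat]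
  exact Matrix.map_one _ (map_zero _) (map_one _)

lemma UmatC_re : UmatC.map Complex.re = Umat := by
  ext i j; simp [UmatC, Matrix.map_apply]

lemma UmatC_im : UmatC.map Complex.im = 0 := by
  ext i j; simp [UmatC, Matrix.map_apply]

lemma flip_unitary (g : Matrix (Fin 4) (Fin 4) ℂ) (hg : gᴴ * UmatC * g = UmatC) :
    g * UmatC * gᴴ = UmatC := by
  have h1 : (UmatC * gᴴ * UmatC) * g = 1 := by
    calc (UmatC * gᴴ * UmatC) * g = UmatC * (gᴴ * UmatC * g) := by
          rw [Matrix.mul_assoc, Matrix.mul_assoc, Matrix.mul_assoc]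
    _ = 1 := by rw [hg, UmatC_mul_UmatC]
  have h2 : g * (UmatC * gᴴ * UmatC) = 1 := mul_eq_one_comm.mp h1
  have h3 : g * UmatC * gᴴ * UmatC = 1 := by rw [← h2]; noncomm_ring
  calc g * UmatC * gᴴ = g * UmatC * gᴴ * (UmatC * UmatC) := by rw [UmatC_mul_UmatC, Matrix.mul_one]
  _ = (g * UmatC * gᴴ * UmatC) * UmatC := by noncomm_ring
  _ = UmatC := by rw [h3, Matrix.one_mul]

theorem jmap_symplectic_and_hom :
    (∀ g : Matrix (Fin 4) (Fin 4) ℂ, IsUnit g → gᴴ * UmatC * g = UmatC →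
      jmap g * J8 * (jmap g)ᵀ = J8) ∧
    (∀ g h : Matrix (Fin 4) (Fin 4) ℂ, IsUnit g → gᴴ * UmatC * g = UmatC →
      IsUnit h → hᴴ * UmatC * h = UmatC →
      jmap (g * h) = jmap g * jmap h) := by
  constructor
  · intro g _ hg
    have hg' := flip_unitary g hg
    set R := g.map Complex.re with hR
    set I := g.map Complex.im with hI
    have h1 : R * Umat * Rᵀ + I * Umat * Iᵀ = Umat := by
      have := congrArg (Matrix.map · Complex.re) hg'
      simpa [re_mul, im_mul, re_ct, im_ct, UmatC_re, UmatC_im, Matrix.mul_assoc] using this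
    have h2 : I * Umat * Rᵀ = R * Umat * Iᵀ := by
      have := congrArg (Matrix.map · Complex.im) hg'
      simp [re_mul, im_mul, re_ct, im_ct, UmatC_re, UmatC_im] at this
      rwa [neg_add_eq_sub, sub_eq_zero] at this
    show jmap g * J8 * (jmap g)ᵀ = J8
    rw [jmap, J8, Matrix.fromBlocks_transpose, Matrix.fromBlocks_multiply, Matrix.fromBlocks_multiply]
    simp only [← hR, ← hI]
    simp only [mul_zero, mul_one, zero_add, add_zero, mul_neg_one, neg_neg,
      Matrix.transpose_mul, Matrix.transpose_neg, Umat_transpose, neg_mul, mul_neg]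
    refine Matrix.fromBlocks_inj.mpr ⟨?_, ?_, ?_, ?_⟩
    · rw [show Umat * I * (Umat * (Rᵀ * Umat)) = Umat * (I * Umat * Rᵀ) * Umat from by noncomm_ring,
        show Umat * R * Umat * (Iᵀ * Umat) = Umat * (R * Umat * Iᵀ) * Umat from by noncomm_ring,
        h2, add_neg_cancel]
    · rw [show -(Umat * I * (Umat * Iᵀ)) + -(Umat * R * Umat * Rᵀ) =
          -(Umat * (R * Umat * Rᵀ + I * Umat * Iᵀ)) from by noncomm_ring, h1, Umat_mul_Umat]
    · rw [show R * (Umat * (Rᵀ * Umat)) + I * Umat * (Iᵀ * Umat) =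
          (R * Umat * Rᵀ + I * Umat * Iᵀ) * Umat from by noncomm_ring, h1, Umat_mul_Umat]
    · rw [show -(R * (Umat * Iᵀ)) + I * Umat * Rᵀ = I * Umat * Rᵀ - R * Umat * Iᵀ from by noncomm_ring,
        h2, sub_self]
  · intro g h _ _ _ _
    have hUX : ∀ X : Matrix (Fin 4) (Fin 4) ℝ, Umat * (Umat * X) = X := by
      intro X; rw [← Matrix.mul_assoc, Umat_mul_Umat, Matrix.one_mul]
    show jmap (g * h) = jmap g * jmap h
    rw [jmap, jmap, jmap, Matrix.fromBlocks_multiply, re_mul, im_mul]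
    simp only [Matrix.mul_assoc, Matrix.neg_mul, hUX]
    refine Matrix.fromBlocks_inj.mpr ⟨?_, ?_, ?_, ?_⟩ <;> noncomm_ring
end
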